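/- arXiv:math/0201288 — 2 statements merged into one kernel-verified Lean document; each statement's English description precedes it below -/
import Mathlib

section
/- The dihedral group Dₙ of order 2n contains a homoclinic triple if and only if n is a multiple of 4. -/
/-- The conjugate subgroup `g H g⁻¹`. -/
def conjSub {G : Type*} [Group G] (g : G) (H : Subgroup G) : Subgroup G :=
  H.map (MulAut.conj g).toMonoidHom

/-- `(K, g, H)` is a homoclinic triple: [HT1] the coset `gH` is disjoint from the
normalizer of `K`, and [HT2] `K` is a proper subgroup of both `H` and `gHg⁻¹`. -/
def HomoclinicTriple {G : Type*} [Group G] (K : Subgroup G) (g : G) (H : Subgroup G) : Prop :=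
  (∀ h ∈ H, g * h ∉ Subgroup.normalizer (K : Set G)) ∧ K < H ∧ K < conjSub g H

/-!
If `4 ∤ n`, a homoclinic triple `(K, g, H)` forces a reflection `s ∈ K` (a subgroup of rotations is
normal, so `g` would normalize it), and `s, g⁻¹sg ∈ H`. Writing `g = t` or `g = st` with `t` a
rotation, `g⁻¹sg = st²`, so `t² ∈ H`. Since `4 ∤ n`, some odd power `t^(2j+1)` squares to `1`, hence
is central, and `g t^(2j) ∈ {1, s} · Z(Dₙ)` normalizes `K`, contradicting [HT1].

If `4 ∣ n`, take `H` the index-two subgroup of elements `ρ^(2i)`, `κρ^(2i)`, `K = ⟨κ⟩` and `g = ρ`.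
An element normalizing `K` fixes `κ` under conjugation, so it is `ρ^c` or `κρ^c` with `2c = 0`;
as `4 ∣ n`, `c` is even. Thus `N(K) ≤ H ∌ g`, and normality of `H` gives [HT1] and [HT2].
-/

open Subgroup

section General

variable {G : Type*} [Group G]

theorem mem_conjSub_iff {g x : G} {H : Subgroup G} : x ∈ conjSub g H ↔ g⁻¹ * x * g ∈ H := by
  rw [conjSub, mem_map_equiv, MulAut.conj_symm_apply]

theorem conjSub_eq_self (g : G) (H : Subgroup G) [H.Normal] : conjSub g H = H :=
  Normal.conj_smul_eq_self g H

theorem homoclinicTriple_of_normal {K H : Subgroup G} [H.Normal] {g : G}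
    (hN : normalizer (K : Set G) ≤ H) (hg : g ∉ H) (hKH : K < H) : HomoclinicTriple K g H := by
  refine ⟨fun h hh hgh => hg ?_, hKH, by rwa [conjSub_eq_self]⟩
  simpa using H.mul_mem (hN hgh) (H.inv_mem hh)

theorem exists_pow_two_mul_add_one_sq_eq_one {n : ℕ} (h4 : ¬ 4 ∣ n) {x : G} (hx : x ^ n = 1) :
    ∃ j : ℕ, (x ^ (2 * j + 1)) ^ 2 = 1 := by
  obtain ⟨k, rfl | rfl⟩ := Nat.even_or_odd' n
  · obtain ⟨j, rfl | rfl⟩ := Nat.even_or_odd' k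
    · exact absurd ⟨j, by ring⟩ h4
    · exact ⟨j, by rw [← pow_mul, mul_comm, hx]⟩
  · exact ⟨k, by rw [hx, one_pow]⟩

theorem ZMod.castHom_two_eq_zero_of_add_self_eq_zero {n : ℕ} (h4 : 4 ∣ n) {c : ZMod n}
    (hc : c + c = 0) :
    ZMod.castHom (dvd_of_mul_left_dvd (a := 2) h4) (ZMod 2) c = 0 := by
  rw [← ZMod.castHom_comp (by norm_num : 2 ∣ 4) h4, RingHom.comp_apply]
  have h : ZMod.castHom h4 (ZMod 4) c + ZMod.castHom h4 (ZMod 4) c = 0 := by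
    rw [← map_add, hc, map_zero]
  generalize ZMod.castHom h4 (ZMod 4) c = d at h ⊢
  revert d; decide

end General

namespace DihedralGroup

variable {n : ℕ}

theorem normal_of_forall_sr_notMem {K : Subgroup (DihedralGroup n)} (hK : ∀ i, sr i ∉ K) :
    K.Normal := by
  refine ⟨fun x hx g => ?_⟩
  rcases x with i | i
  · rcases g with c | c
    · simpa [r_mul_r, inv_r, add_comm] using hx
    · simpa [sr_mul_r, sr_mul_sr, inv_sr] using K.inv_mem hx
  · exact absurd hx (hK i)

theorem r_mem_center_of_sq_eq_one {i : ZMod n} (h : r i ^ 2 = 1) :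
    r i ∈ center (DihedralGroup n) := by
  rw [r_pow, one_def, r.injEq, Nat.cast_ofNat] at h
  rw [mem_center_iff]
  rintro (j | j)
  · simp only [r_mul_r, add_comm]
  · simp only [r_mul_sr, sr_mul_r, sr.injEq]
    linear_combination h

theorem exists_mul_mem_normalizer (h4 : ¬ 4 ∣ n) {K H : Subgroup (DihedralGroup n)} {a : ZMod n}
    (haK : sr a ∈ K) (haH : sr a ∈ H) {g : DihedralGroup n} (hg : g⁻¹ * sr a * g ∈ H) :
    ∃ h ∈ H, g * h ∈ normalizer (K : Set (DihedralGroup n)) := by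
  obtain ⟨c, e, heK, rfl, hconj⟩ : ∃ (c : ZMod n) (e : DihedralGroup n), e ∈ K ∧
      g = e * r c ∧ g⁻¹ * sr a * g = sr a * r c ^ 2 := by
    rcases g with c | c
    · refine ⟨c, 1, K.one_mem, (one_mul _).symm, ?_⟩
      simp only [inv_r, r_mul_sr, sr_mul_r, r_pow, sr.injEq]
      push_cast; ring
    · refine ⟨c - a, sr a, haK, by simp [sr_mul_r], ?_⟩
      simp only [inv_sr, sr_mul_sr, r_mul_sr, sr_mul_r, r_pow, sr.injEq]
      push_cast; ring
  have hsq : r c ^ 2 ∈ H := by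
    have := H.mul_mem haH (hconj ▸ hg)
    rwa [← mul_assoc, sr_mul_self, one_mul] at this
  obtain ⟨j, hj⟩ := exists_pow_two_mul_add_one_sq_eq_one h4 (x := r c)
    (by rw [r_pow, ZMod.natCast_self, mul_zero, r_zero])
  refine ⟨(r c ^ 2) ^ j, pow_mem hsq j, ?_⟩
  rw [mul_assoc, ← pow_mul, ← pow_succ']
  refine mul_mem (le_normalizer heK) (center_le_normalizer _ ?_)
  rw [r_pow] at hj ⊢
  exact r_mem_center_of_sq_eq_one hj

theorem four_dvd_of_homoclinicTriple {K H : Subgroup (DihedralGroup n)} {g : DihedralGroup n}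
    (hT : HomoclinicTriple K g H) : 4 ∣ n := by
  obtain ⟨hT1, hKH, hKgH⟩ := hT
  by_contra h4
  obtain ⟨a, ha⟩ : ∃ a, sr a ∈ K := by
    by_contra! hK
    have := normal_of_forall_sr_notMem hK
    exact hT1 1 H.one_mem (by simp [normalizer_eq_top])
  obtain ⟨h, hh, hgh⟩ := exists_mul_mem_normalizer h4 ha (hKH.le ha) (mem_conjSub_iff.1 (hKgH.le ha))
  exact hT1 h hh hgh

theorem sr_ne_one (i : ZMod n) : sr i ≠ 1 := by
  rw [one_def]; exact nofun

theorem mem_zpowers_sr_iff {i : ZMod n} {x : DihedralGroup n} :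
    x ∈ zpowers (sr i) ↔ x = 1 ∨ x = sr i := by
  classical
  have hfin : IsOfFinOrder (sr i) := orderOf_pos_iff.1 (by rw [orderOf_sr]; norm_num)
  rw [hfin.mem_zpowers_iff_mem_range_orderOf, orderOf_sr]
  simp [Finset.range_add_one, or_comm]

def parity (h2 : 2 ∣ n) : DihedralGroup n →* Multiplicative (ZMod 2) where
  toFun
    | r i => .ofAdd (ZMod.castHom h2 (ZMod 2) i)
    | sr i => .ofAdd (ZMod.castHom h2 (ZMod 2) i)
  map_one' := by
    show Multiplicative.ofAdd (ZMod.castHom h2 (ZMod 2) 0) = 1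
    rw [map_zero, ofAdd_zero]
  map_mul' := by
    rintro (i | i) (j | j) <;>
      simp only [r_mul_r, r_mul_sr, sr_mul_r, sr_mul_sr, map_add, map_sub, ← ofAdd_add] <;>
      generalize ZMod.castHom h2 (ZMod 2) i = a, ZMod.castHom h2 (ZMod 2) j = b <;>
      revert a b <;> decide

@[simp] theorem parity_r (h2 : 2 ∣ n) (i : ZMod n) :
    parity h2 (r i) = .ofAdd (ZMod.castHom h2 (ZMod 2) i) := rfl

@[simp] theorem parity_sr (h2 : 2 ∣ n) (i : ZMod n) :
    parity h2 (sr i) = .ofAdd (ZMod.castHom h2 (ZMod 2) i) := rfl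

theorem normalizer_zpowers_sr_zero_le_ker_parity (h4 : 4 ∣ n) :
    normalizer ((zpowers (sr 0) : Subgroup (DihedralGroup n)) : Set (DihedralGroup n)) ≤
      (parity (dvd_of_mul_left_dvd (a := 2) h4)).ker := by
  intro x hx
  have hconj := (mem_normalizer_iff.1 hx (sr 0)).1 (mem_zpowers _)
  rw [MonoidHom.mem_ker]
  rcases x with c | c <;>
    simp only [mem_zpowers_sr_iff, sr_ne_one, false_or, inv_r, inv_sr, r_mul_sr, sr_mul_r,
      sr_mul_sr, sr.injEq, zero_sub, sub_neg_eq_add, ← neg_add, neg_eq_zero] at hconj <;>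
    exact ofAdd_eq_one.2 (ZMod.castHom_two_eq_zero_of_add_self_eq_zero h4 hconj)

theorem r_one_notMem_ker_parity (h2 : 2 ∣ n) : r 1 ∉ (parity h2).ker := by
  rw [MonoidHom.mem_ker, parity_r, map_one]
  decide

theorem zpowers_sr_zero_lt_ker_parity (h2 : 2 ∣ n) (hn : n ≠ 2) :
    zpowers (sr 0) < (parity h2).ker := by
  rw [SetLike.lt_iff_le_and_exists]
  refine ⟨zpowers_le.2 (by rw [MonoidHom.mem_ker, parity_sr, map_zero]; rfl), r 2, ?_, ?_⟩
  · rw [MonoidHom.mem_ker, parity_r, map_ofNat]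
    decide
  · rw [mem_zpowers_sr_iff, one_def]
    simp only [r.injEq, reduceCtorEq, or_false]
    intro h
    have h' : n ∣ 2 := (ZMod.natCast_eq_zero_iff 2 n).1 (by exact_mod_cast h)
    rcases (Nat.dvd_prime Nat.prime_two).1 h' with rfl | rfl
    · norm_num at h2
    · exact hn rfl

theorem homoclinicTriple_of_four_dvd (h4 : 4 ∣ n) :
    HomoclinicTriple (zpowers (sr 0)) (r 1) (parity (dvd_of_mul_left_dvd (a := 2) h4)).ker :=
  homoclinicTriple_of_normal (normalizer_zpowers_sr_zero_le_ker_parity h4)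
    (r_one_notMem_ker_parity _) (zpowers_sr_zero_lt_ker_parity _ (by rintro rfl; norm_num at h4))

end DihedralGroup

theorem Dn_triple_iff_general (n : ℕ) :
    (∃ (K H : Subgroup (DihedralGroup n)) (g : DihedralGroup n),
      HomoclinicTriple K g H) ↔ 4 ∣ n :=
  ⟨fun ⟨_, _, _, hT⟩ => DihedralGroup.four_dvd_of_homoclinicTriple hT,
    fun h4 => ⟨_, _, _, DihedralGroup.homoclinicTriple_of_four_dvd h4⟩⟩

theorem Dn_triple_iff (n : ℕ) (hn : 0 < n) :
    (∃ (K H : Subgroup (DihedralGroup n)) (g : DihedralGroup n),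
      HomoclinicTriple K g H) ↔ 4 ∣ n :=
  Dn_triple_iff_general n
end

section
/- Let G = D_{4n} be the dihedral group of order 8n, with generators ρ (rotation of order 4n) and κ (reflection). Let q divide n, K = ⟨κ, ρ^{4n/q}⟩ ≅ D_q, p a multiple of q with q ≠ p and p dividing 2n, H = ⟨κ, ρ^{4n/p}⟩ ≅ D_p, and g = ρʳ where r ≡ (2n/p) mod (4n/p) and the multiplicity of 2 in the prime factorization of r is at most the multiplicity of 2 in n/q. Then (K, g, H) is a homoclinic triple for G. -/
theorem conjSub_eq_self_of_mem_normalizer {G : Type*} [Group G] {g : G} {H : Subgroup G}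
    (hg : g ∈ Subgroup.normalizer (H : Set G)) : conjSub g H = H :=
  Subgroup.mem_normalizer_iff_map_conj_eq.1 hg

namespace DihedralGroup

open Subgroup
open AddSubgroup (zmultiples mem_zmultiples)

variable {N : ℕ}

def ofAddSubgroup (A : AddSubgroup (ZMod N)) : Subgroup (DihedralGroup N) where
  carrier := {x | match x with | r i => i ∈ A | sr i => i ∈ A}
  one_mem' := A.zero_mem
  mul_mem' := by
    rintro (i | i) (j | j) hi hj <;>
      simp only [Set.mem_ofPred_eq, r_mul_r, r_mul_sr, sr_mul_r, sr_mul_sr] at hi hj ⊢ <;>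
      first | exact A.add_mem hi hj | exact A.sub_mem hj hi
  inv_mem' := by
    rintro (i | i) hi
    · exact A.neg_mem hi
    · exact hi

variable {A B : AddSubgroup (ZMod N)}

@[simp]
theorem r_mem_ofAddSubgroup {i : ZMod N} : r i ∈ ofAddSubgroup A ↔ i ∈ A := Iff.rfl

@[simp]
theorem sr_mem_ofAddSubgroup {i : ZMod N} : sr i ∈ ofAddSubgroup A ↔ i ∈ A := Iff.rfl

theorem ofAddSubgroup_le_ofAddSubgroup_iff : ofAddSubgroup A ≤ ofAddSubgroup B ↔ A ≤ B :=
  ⟨fun h i hi => r_mem_ofAddSubgroup.1 (h (r_mem_ofAddSubgroup.2 hi)),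
    fun h x => by cases x <;> exact fun hx => h hx⟩

theorem ofAddSubgroup_strictMono : StrictMono (ofAddSubgroup (N := N)) :=
  strictMono_of_le_iff_le fun _ _ => ofAddSubgroup_le_ofAddSubgroup_iff.symm

theorem closure_sr_zero_r (a : ZMod N) :
    closure {sr 0, r a} = ofAddSubgroup (zmultiples a) := by
  apply le_antisymm
  · rw [closure_le]
    rintro x (rfl | rfl)
    · exact (zmultiples a).zero_mem
    · exact mem_zmultiples a
  · have hsr : sr 0 ∈ closure {sr 0, r a} := subset_closure (by simp)
    have hr : r a ∈ closure {sr 0, r a} := subset_closure (by simp)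
    rintro (i | i) ⟨k, rfl⟩
    · simpa [zsmul_eq_mul, mul_comm] using zpow_mem hr k
    · simpa [zsmul_eq_mul, mul_comm] using mul_mem hsr (zpow_mem hr k)

theorem r_mem_normalizer_ofAddSubgroup {t : ZMod N} :
    r t ∈ normalizer (ofAddSubgroup A : Set (DihedralGroup N)) ↔ 2 * t ∈ A := by
  refine ⟨fun h => ?_, fun h => mem_normalizer_iff.2 fun x => ?_⟩
  · have := (mem_normalizer_iff.1 h (sr 0)).1 A.zero_mem
    rw [← neg_mem_iff]
    simpa [r_mul_sr, sr_mul_r, two_mul] using this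
  · cases x
    · simp [r_mul_r]
    · rename_i i
      simp only [sr_mem_ofAddSubgroup, inv_r, r_mul_sr, sr_mul_r]
      rw [show i - t + -t = i + -(2 * t) by ring, A.add_mem_cancel_right (A.neg_mem h)]

theorem sr_mem_normalizer_ofAddSubgroup {t : ZMod N} :
    sr t ∈ normalizer (ofAddSubgroup A : Set (DihedralGroup N)) ↔ 2 * t ∈ A := by
  refine ⟨fun h => ?_, fun h => mem_normalizer_iff.2 fun x => ?_⟩
  · have := (mem_normalizer_iff.1 h (sr 0)).1 A.zero_mem
    simpa [sr_mul_r, sr_mul_sr, r_mul_sr, two_mul] using this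
  · cases x
    · simp [sr_mul_r, sr_mul_sr]
    · rename_i i
      simp only [sr_mem_ofAddSubgroup, inv_sr, sr_mul_sr, r_mul_sr]
      rw [show t - (i - t) = -i + 2 * t by ring, A.add_mem_cancel_right h, neg_mem_iff]

theorem homoclinicTriple_ofAddSubgroup {g : ZMod N} (hAB : A < B) (hg : 2 * g ∈ B)
    (hgA : ∀ j ∈ B, 2 * (g + j) ∉ A) :
    HomoclinicTriple (ofAddSubgroup A) (r g) (ofAddSubgroup B) := by
  refine ⟨?_, ofAddSubgroup_strictMono hAB, ?_⟩
  · rintro (j | j) hj hmem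
    · rw [r_mul_r, r_mem_normalizer_ofAddSubgroup] at hmem
      exact hgA j hj hmem
    · rw [r_mul_sr, sr_mem_normalizer_ofAddSubgroup, ← neg_mem_iff] at hmem
      exact hgA (-j) (B.neg_mem hj) (by convert hmem using 1; ring)
  · rw [conjSub_eq_self_of_mem_normalizer (r_mem_normalizer_ofAddSubgroup.2 hg)]
    exact ofAddSubgroup_strictMono hAB

end DihedralGroup

theorem ZMod.intCast_mem_zmultiples_natCast_iff {N d : ℕ} (hd : d ∣ N) (x : ℤ) :
    (x : ZMod N) ∈ AddSubgroup.zmultiples (d : ZMod N) ↔ (d : ℤ) ∣ x := by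
  rw [AddSubgroup.mem_zmultiples_iff]
  constructor
  · rintro ⟨k, hk⟩
    rw [zsmul_eq_mul, ← Int.cast_natCast, ← Int.cast_mul,
      ZMod.intCast_eq_intCast_iff_dvd_sub] at hk
    exact (dvd_sub_left (dvd_mul_left _ _)).1 ((Int.natCast_dvd_natCast.2 hd).trans hk)
  · rintro ⟨k, rfl⟩
    exact ⟨k, by push_cast; ring⟩

open DihedralGroup in
theorem homoclinicTriple_closure {N a b t : ℕ} (ha : a ∣ N) (hab : 2 * b ∣ a)
    (hbt2 : b ∣ 2 * t) (hbt : ¬ b ∣ t) :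
    HomoclinicTriple (Subgroup.closure {sr 0, r (a : ZMod N)}) (r (t : ZMod N))
      (Subgroup.closure {sr 0, r (b : ZMod N)}) := by
  have hb : b ∣ N := (dvd_of_mul_left_dvd hab).trans ha
  have mem_iff {d : ℕ} (hd : d ∣ N) (x : ℤ) := ZMod.intCast_mem_zmultiples_natCast_iff hd x
  rw [closure_sr_zero_r, closure_sr_zero_r]
  refine homoclinicTriple_ofAddSubgroup ?_ ?_ ?_
  · refine SetLike.lt_iff_le_and_exists.2
      ⟨?_, (b : ZMod N), AddSubgroup.mem_zmultiples _, fun hmem => ?_⟩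
    · rw [AddSubgroup.zmultiples_le, ← Int.cast_natCast a, mem_iff hb]
      exact_mod_cast dvd_of_mul_left_dvd hab
    · rw [← Int.cast_natCast b, mem_iff ha] at hmem
      have hb0 : 0 < b := Nat.pos_of_ne_zero (by rintro rfl; simp_all)
      have := Nat.le_of_dvd hb0 (hab.trans (Int.natCast_dvd_natCast.1 hmem))
      omega
  · rw [show 2 * (t : ZMod N) = ((2 * t : ℤ) : ZMod N) by push_cast; ring, mem_iff hb]
    exact_mod_cast hbt2
  · rintro _ ⟨k, rfl⟩ hmem
    rw [show 2 * ((t : ZMod N) + k • (b : ZMod N)) = ((2 * (t + k * b) : ℤ) : ZMod N) by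
      push_cast [zsmul_eq_mul]; ring, mem_iff ha] at hmem
    have h2b : (2 * b : ℤ) ∣ 2 * (t + k * b) := (Int.natCast_dvd_natCast.2 hab).trans hmem
    have : (b : ℤ) ∣ t + k * b := Int.dvd_of_mul_dvd_mul_left two_ne_zero (by exact_mod_cast h2b)
    exact hbt (Int.natCast_dvd_natCast.1 ((dvd_add_left (dvd_mul_left _ _)).1 this))

theorem padicValNat_two_mul_odd {c w : ℕ} (hw : Odd w) :
    padicValNat 2 (c * w) = padicValNat 2 c := by
  rcases Nat.eq_zero_or_pos c with rfl | hc
  · simp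
  · rw [padicValNat.mul hc.ne' (by rintro rfl; simp at hw),
      padicValNat.eq_zero_of_not_dvd (n := w) (by simpa [← even_iff_two_dvd] using hw), add_zero]

theorem Nat.dvd_of_dvd_two_mul_of_padicValNat_le {c u : ℕ} (hu : u ≠ 0) (h : c ∣ 2 * u)
    (hv : padicValNat 2 c ≤ padicValNat 2 u) : c ∣ u := by
  obtain ⟨s, hs⟩ := h
  have hc : c ≠ 0 := by rintro rfl; omega
  have hs0 : s ≠ 0 := by rintro rfl; omega
  have hval := congrArg (padicValNat 2) hs
  rw [padicValNat.mul two_ne_zero hu, padicValNat.mul hc hs0, padicValNat_self] at hval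
  obtain ⟨s', rfl⟩ := dvd_of_one_le_padicValNat (p := 2) (n := s) (by omega)
  exact ⟨s', by linarith⟩

theorem Nat.exists_eq_mul_odd_of_mod_two_mul {r c : ℕ} (h : r % (2 * c) = c % (2 * c)) :
    ∃ m, r = c * (2 * m + 1) := by
  refine ⟨r / (2 * c), ?_⟩
  rcases Nat.eq_zero_or_pos c with rfl | hc
  · simpa using h
  · rw [Nat.mod_eq_of_lt (show c < 2 * c by omega)] at h
    calc r = 2 * c * (r / (2 * c)) + r % (2 * c) := (Nat.div_add_mod r (2 * c)).symm
      _ = c * (2 * (r / (2 * c)) + 1) := by rw [h]; ring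

theorem Nat.div_dvd_div_of_padicValNat_le {n p q : ℕ} (hn : 0 < n) (hq : q ∣ n) (hqp : q ∣ p)
    (hp : p ∣ 2 * n) (hv : padicValNat 2 (2 * n / p) ≤ padicValNat 2 (n / q)) :
    2 * n / p ∣ n / q := by
  refine Nat.dvd_of_dvd_two_mul_of_padicValNat_le ?_ ?_ hv
  · exact (Nat.div_pos (Nat.le_of_dvd hn hq) (Nat.pos_of_dvd_of_pos hq hn)).ne'
  · rw [← Nat.mul_div_assoc 2 hq]
    exact Nat.div_dvd_div_left hp hqp

theorem D4n_triples_general (n q p r : ℕ) (hn : 0 < n) (hq : q ∣ n)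
    (hqp : q ∣ p) (hp : p ∣ 2 * n)
    (hcong : r % (4 * n / p) = (2 * n / p) % (4 * n / p))
    (ht2 : padicValNat 2 r ≤ padicValNat 2 (n / q)) :
    HomoclinicTriple
      (Subgroup.closure {DihedralGroup.sr 0,
          DihedralGroup.r ((4 * n / q : ℕ) : ZMod (4 * n))} :
        Subgroup (DihedralGroup (4 * n)))
      (DihedralGroup.r ((r : ℕ) : ZMod (4 * n)))
      (Subgroup.closure {DihedralGroup.sr 0,
          DihedralGroup.r ((4 * n / p : ℕ) : ZMod (4 * n))}) := by
  set c := 2 * n / p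
  have hb : 4 * n / p = 2 * c := by rw [show 4 * n = 2 * (2 * n) by ring, Nat.mul_div_assoc 2 hp]
  have hc : 0 < c := Nat.div_pos (Nat.le_of_dvd (by omega) hp) (Nat.pos_of_dvd_of_pos hp (by omega))
  rw [hb] at hcong
  obtain ⟨m, hrm⟩ := Nat.exists_eq_mul_odd_of_mod_two_mul hcong
  have hcu : c ∣ n / q := by
    refine Nat.div_dvd_div_of_padicValNat_le hn hq hqp hp ?_
    rwa [hrm, padicValNat_two_mul_odd (odd_two_mul_add_one m)] at ht2
  refine homoclinicTriple_closure (Nat.div_dvd_of_dvd (hq.mul_left 4)) ?_ ?_ ?_ <;> rw [hb]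
  · rw [Nat.mul_div_assoc 4 hq, ← mul_assoc]
    exact Nat.mul_dvd_mul_left 4 hcu
  · exact ⟨2 * m + 1, by rw [hrm]; ring⟩
  · rintro ⟨k, hk⟩
    rw [hrm, mul_comm 2 c, mul_assoc] at hk
    have := Nat.eq_of_mul_eq_mul_left hc hk
    omega

theorem D4n_triples (n q p r : ℕ) (hn : 0 < n) (hq : q ∣ n)
    (hqp : q ∣ p) (hne : q ≠ p) (hp : p ∣ 2 * n) (hr : 0 < r)
    (hcong : r % (4 * n / p) = (2 * n / p) % (4 * n / p))
    (ht2 : padicValNat 2 r ≤ padicValNat 2 (n / q)) :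
    HomoclinicTriple
      (Subgroup.closure {DihedralGroup.sr 0,
          DihedralGroup.r ((4 * n / q : ℕ) : ZMod (4 * n))} :
        Subgroup (DihedralGroup (4 * n)))
      (DihedralGroup.r ((r : ℕ) : ZMod (4 * n)))
      (Subgroup.closure {DihedralGroup.sr 0,
          DihedralGroup.r ((4 * n / p : ℕ) : ZMod (4 * n))}) :=
  D4n_triples_general n q p r hn hq hqp hp hcong ht2
end
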